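/- (Semantic correctness of loop fission.) Let C = while e do (C₁;…;Cₙ) be a loop of the WHILE language, E its dependency relation, and S₁,…,S_k a saturated covering of C, with split loops C^1,…,C^k. Suppose the execution of C from a state σ terminates in a state σ'. For each j let σ_j be the final state of the (terminating) execution of C^j from σ. Define a state τ : Var → Val by: τ(x) = σ_j(x) whenever x ∈ Out(C_i) for some i ∈ S_j (this value is independent of the choice of such j), and τ(x) = σ(x) whenever x ∉ Out(C_i) for all i ∈ {1,…,n}. Then τ = σ'. That is, the transformed program C̃, which runs the split loops C^1,…,C^k on private copies of the state and takes the value of each variable from a loop that modifies it, has exactly the same semantics as the original loop C. -/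

import Mathlib

/-- Variables: a countably infinite set. -/
abbrev Var := ℕ

/-- Values: integers or integer arrays (total functions ℤ → ℤ). -/
inductive Val : Type where
  | int : ℤ → Val
  | arr : (ℤ → ℤ) → Val

/-- Coerce a value to an integer. -/
def Val.toInt : Val → ℤ
  | .int z => z
  | .arr _ => 0

/-- Coerce a value to an array. -/
def Val.toArr : Val → (ℤ → ℤ)
  | .int _ => fun _ => 0
  | .arr a => a

/-- States: total maps from variables to values. -/
abbrev State := Var → Val

/-- Expressions: variables, integer literals, array reads, and
applications of fixed interpreted `n`-ary operators. -/
inductive Expr : Type where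
  | var : Var → Expr
  | lit : ℤ → Expr
  | read : Var → Expr → Expr
  | op : (n : ℕ) → ((Fin n → ℤ) → ℤ) → (Fin n → Expr) → Expr

/-- Evaluation of expressions. -/
def Expr.eval (σ : State) : Expr → Val
  | .var x => σ x
  | .lit z => .int z
  | .read t e => .int ((σ t).toArr ((Expr.eval σ e).toInt))
  | .op n f args => .int (f fun i => (Expr.eval σ (args i)).toInt)

/-- An expression is truthy in a state if it evaluates to a nonzero integer. -/
def Expr.truthy (e : Expr) (σ : State) : Prop := (e.eval σ).toInt ≠ 0

/-- Variables occurring in an expression. -/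
def Expr.occ : Expr → Set Var
  | .var x => {x}
  | .lit _ => ∅
  | .read t e => {t} ∪ Expr.occ e
  | .op n _ args => ⋃ i : Fin n, Expr.occ (args i)

/-- Commands of the WHILE language. -/
inductive Com : Type where
  | assign : Var → Expr → Com
  | store : Var → Expr → Expr → Com          -- t[e₁] := e₂
  | ite : Expr → Com → Com → Com
  | whileDo : Expr → Com → Com
  | use : List Var → Com
  | skip : Com
  | seq : Com → Com → Com

/-- `Out C`: the set of variables modified by `C`. -/
def Com.out : Com → Set Var
  | .assign x _ => {x}
  | .store t _ _ => {t}
  | .ite _ c₁ c₂ => c₁.out ∪ c₂.out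
  | .whileDo _ c => c.out
  | .use _ => ∅
  | .skip => ∅
  | .seq c₁ c₂ => c₁.out ∪ c₂.out

/-- `In C`: the set of variables used by `C`. -/
def Com.inp : Com → Set Var
  | .assign _ e => e.occ
  | .store _ e₁ e₂ => e₁.occ ∪ e₂.occ
  | .ite e c₁ c₂ => e.occ ∪ c₁.inp ∪ c₂.inp
  | .whileDo e c => e.occ ∪ c.inp
  | .use xs => {x | x ∈ xs}
  | .skip => ∅
  | .seq c₁ c₂ => c₁.inp ∪ c₂.inp

/-- `Occ C`: the set of variables occurring in `C`. -/
def Com.occ : Com → Set Var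
  | .assign x e => {x} ∪ e.occ
  | .store t e₁ e₂ => {t} ∪ e₁.occ ∪ e₂.occ
  | .ite e c₁ c₂ => e.occ ∪ c₁.occ ∪ c₂.occ
  | .whileDo e c => e.occ ∪ c.occ
  | .use xs => {x | x ∈ xs}
  | .skip => ∅
  | .seq c₁ c₂ => c₁.occ ∪ c₂.occ

/-- Standard deterministic big-step operational semantics. -/
inductive BigStep : Com → State → State → Prop where
  | assign {x e σ} :
      BigStep (.assign x e) σ (Function.update σ x (e.eval σ))
  | store {t e₁ e₂ σ} :
      BigStep (.store t e₁ e₂) σ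
        (Function.update σ t
          (Val.arr (Function.update (σ t).toArr ((e₁.eval σ).toInt) ((e₂.eval σ).toInt))))
  | iteTrue {e c₁ c₂ σ σ'} : e.truthy σ → BigStep c₁ σ σ' →
      BigStep (.ite e c₁ c₂) σ σ'
  | iteFalse {e c₁ c₂ σ σ'} : ¬ e.truthy σ → BigStep c₂ σ σ' →
      BigStep (.ite e c₁ c₂) σ σ'
  | whileTrue {e c σ σ₁ σ₂} : e.truthy σ → BigStep c σ σ₁ →
      BigStep (.whileDo e c) σ₁ σ₂ → BigStep (.whileDo e c) σ σ₂
  | whileFalse {e c σ} : ¬ e.truthy σ → BigStep (.whileDo e c) σ σ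
  | use {xs σ} : BigStep (.use xs) σ σ
  | skip {σ} : BigStep .skip σ σ
  | seq {c₁ c₂ σ σ₁ σ₂} : BigStep c₁ σ σ₁ → BigStep c₂ σ₁ σ₂ →
      BigStep (.seq c₁ c₂) σ σ₂

/-- Sequential composition of a list of commands. -/
def seqList (l : List Com) : Com := l.foldr Com.seq Com.skip

/-- The body `C_{i₁};…;C_{i_m}` selected by a set `S` of indices,
with `i₁ < … < i_m` enumerating `S`. -/
def selBody {n : ℕ} (body : Fin n → Com) (S : Finset (Fin n)) : Com :=
  seqList ((S.sort (· ≤ ·)).map body)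

/-- The split loop `while e do (C_{i₁};…;C_{i_m})` for a set `S` of indices. -/
def splitLoop {n : ℕ} (e : Expr) (body : Fin n → Com) (S : Finset (Fin n)) : Com :=
  Com.whileDo e (selBody body S)

/-- The dependency relation of the loop `while e do (C₁;…;Cₙ)`:
`Dep e body i j` iff either `i ≠ j` and `Out(C_j) ∩ (In(C_i) ∪ Out(C_i)) ≠ ∅`
(flow and output dependence), or `Out(C_j) ∩ Occ(e) ≠ ∅` (loop-guard correction). -/
def Dep {n : ℕ} (e : Expr) (body : Fin n → Com) (i j : Fin n) : Prop :=
  (i ≠ j ∧ ((body j).out ∩ ((body i).inp ∪ (body i).out)).Nonempty) ∨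
  ((body j).out ∩ e.occ).Nonempty

/-- A saturated covering of the loop `while e do (C₁;…;Cₙ)`:
a finite family of nonempty subsets of `{1,…,n}` covering it,
each closed under the dependency relation. -/
def SaturatedCovering {n k : ℕ} (e : Expr) (body : Fin n → Com)
    (S : Fin k → Finset (Fin n)) : Prop :=
  (∀ j, (S j).Nonempty) ∧ (∀ i, ∃ j, i ∈ S j) ∧
  (∀ j i m, i ∈ S j → Dep e body i m → m ∈ S j)

/-- `p`-fold sequential iteration of a command. -/
def iterate (c : Com) (p : ℕ) : Com := seqList (List.replicate p c)

/-! The split loop `C^j` runs the same number of iterations as `C`, because the guard reads no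
variable written outside `S j`; and along the way it computes the same values on the footprint
`Occ(e) ∪ ⋃_{i ∈ S j} (In(C_i) ∪ Out(C_i))`, because the commands it skips write nothing there
(closure of `S j` under the dependency relation). So each `σ_j` agrees with `σ'` on the
variables written by `C^j`, and variables written by no `C_i` keep their initial value. -/

open Set

theorem Expr.eval_congr {σ ρ : State} : ∀ e : Expr, EqOn σ ρ e.occ → e.eval σ = e.eval ρ
  | .var _, h => h rfl
  | .lit _, _ => rfl
  | .read t e, h => by
      simp only [Expr.occ, eqOn_union] at h
      simp only [Expr.eval, h.1 rfl, e.eval_congr h.2]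
  | .op _ _ args, h => by
      simp only [Expr.occ] at h
      have hargs i := (args i).eval_congr (h.mono (subset_iUnion (fun i => (args i).occ) i))
      simp only [Expr.eval, hargs]

theorem Expr.truthy_congr {σ ρ : State} {e : Expr} (h : EqOn σ ρ e.occ) :
    e.truthy σ ↔ e.truthy ρ := by
  rw [Expr.truthy, Expr.truthy, e.eval_congr h]

theorem BigStep.eq_of_notMem_out {c : Com} {σ σ' : State} (h : BigStep c σ σ') {x : Var}
    (hx : x ∉ c.out) : σ' x = σ x := by
  induction h with
  | assign | store =>
    simp only [Com.out, mem_singleton_iff] at hx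
    exact Function.update_of_ne hx _ _
  | iteTrue _ _ ih => exact ih fun h => hx (Or.inl h)
  | iteFalse _ _ ih => exact ih fun h => hx (Or.inr h)
  | whileTrue _ _ _ ih₁ ih₂ => rw [ih₂ hx, ih₁ hx]
  | whileFalse | use | skip => rfl
  | seq _ _ ih₁ ih₂ => rw [ih₂ fun h => hx (Or.inr h), ih₁ fun h => hx (Or.inl h)]

theorem BigStep.determ {c : Com} {σ σ₁ σ₂ : State} (h₁ : BigStep c σ σ₁)
    (h₂ : BigStep c σ σ₂) : σ₁ = σ₂ := by
  induction h₁ generalizing σ₂ with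
  | assign | store | use | skip => cases h₂; rfl
  | iteTrue ht _ ih =>
    cases h₂ with
    | iteTrue _ h => exact ih h
    | iteFalse hf _ => exact absurd ht hf
  | iteFalse hf _ ih =>
    cases h₂ with
    | iteTrue ht _ => exact absurd ht hf
    | iteFalse _ h => exact ih h
  | whileTrue ht _ _ ih₁ ih₂ =>
    cases h₂ with
    | whileTrue _ h₁ h₂ => cases ih₁ h₁; exact ih₂ h₂
    | whileFalse hf => exact absurd ht hf
  | whileFalse hf =>
    cases h₂ with
    | whileTrue ht _ _ => exact absurd ht hf
    | whileFalse _ => rfl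
  | seq _ _ ih₁ ih₂ =>
    cases h₂ with
    | seq h₁ h₂ => cases ih₁ h₁; exact ih₂ h₂

theorem Com.out_seqList (l : List Com) : (seqList l).out = ⋃ c ∈ l, c.out := by
  induction l with
  | nil => simp [seqList, Com.out]
  | cons c l ih => simp [seqList, Com.out, ← ih]

theorem Set.EqOn.update {α β : Type*} [DecidableEq α] {f g : α → β} {s : Set α}
    (h : EqOn f g s) (a : α) {b c : β} (hbc : b = c) :
    EqOn (Function.update f a b) (Function.update g a c) s := by
  intro x hx
  by_cases hxa : x = a
  · subst hxa; simp [hbc]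
  · simp [hxa, h hx]

def Simulates (V : Set Var) (c c' : Com) : Prop :=
  ∀ ⦃σ σ' ρ⦄, BigStep c σ σ' → EqOn σ ρ V → ∃ ρ', BigStep c' ρ ρ' ∧ EqOn σ' ρ' V

namespace Simulates

variable {V : Set Var}

theorem seq {c₁ c₂ c₁' c₂' : Com} (h₁ : Simulates V c₁ c₁') (h₂ : Simulates V c₂ c₂') :
    Simulates V (.seq c₁ c₂) (.seq c₁' c₂') := by
  intro σ σ' ρ hc hσρ
  cases hc with | seq hc₁ hc₂ =>
  obtain ⟨ρ₁, hρ₁, hσρ₁⟩ := h₁ hc₁ hσρ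
  obtain ⟨ρ₂, hρ₂, hσρ₂⟩ := h₂ hc₂ hσρ₁
  exact ⟨ρ₂, .seq hρ₁ hρ₂, hσρ₂⟩

theorem seq_left_of_disjoint {c₁ c₂ c₂' : Com} (h₁ : Disjoint c₁.out V)
    (h₂ : Simulates V c₂ c₂') : Simulates V (.seq c₁ c₂) c₂' := by
  intro σ σ' ρ hc hσρ
  cases hc with | seq hc₁ hc₂ =>
  refine h₂ hc₂ fun x hx => ?_
  rw [hc₁.eq_of_notMem_out (h₁.notMem_of_mem_right hx)]
  exact hσρ hx

theorem ite {e : Expr} {c₁ c₂ c₁' c₂' : Com} (he : e.occ ⊆ V) (h₁ : Simulates V c₁ c₁')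
    (h₂ : Simulates V c₂ c₂') : Simulates V (.ite e c₁ c₂) (.ite e c₁' c₂') := by
  intro σ σ' ρ hc hσρ
  have hguard := Expr.truthy_congr (hσρ.mono he)
  cases hc with
  | iteTrue ht hc =>
    obtain ⟨ρ', hρ', hσρ'⟩ := h₁ hc hσρ
    exact ⟨ρ', .iteTrue (hguard.1 ht) hρ', hσρ'⟩
  | iteFalse hf hc =>
    obtain ⟨ρ', hρ', hσρ'⟩ := h₂ hc hσρ
    exact ⟨ρ', .iteFalse (mt hguard.2 hf) hρ', hσρ'⟩

theorem whileDo {e : Expr} {c c' : Com} (he : e.occ ⊆ V) (hc : Simulates V c c') :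
    Simulates V (.whileDo e c) (.whileDo e c') := by
  intro σ σ' ρ h hσρ
  generalize hw : Com.whileDo e c = w at h
  induction h generalizing ρ with
  | whileTrue ht hbody _ _ ih =>
    cases hw
    obtain ⟨ρ₁, hρ₁, hσρ₁⟩ := hc hbody hσρ
    obtain ⟨ρ', hρ', hσρ'⟩ := ih hσρ₁ rfl
    exact ⟨ρ', .whileTrue ((Expr.truthy_congr (hσρ.mono he)).1 ht) hρ₁ hρ', hσρ'⟩
  | whileFalse hf =>
    cases hw
    exact ⟨ρ, .whileFalse (mt (Expr.truthy_congr (hσρ.mono he)).2 hf), hσρ⟩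
  | _ => cases hw

theorem refl_of_subset {c : Com} (hc : c.inp ∪ c.out ⊆ V) : Simulates V c c := by
  induction c with
  | assign x e =>
    rintro σ σ' ρ ⟨⟩ hσρ
    simp only [Com.inp, Com.out, union_subset_iff, singleton_subset_iff] at hc
    exact ⟨_, .assign, hσρ.update x (e.eval_congr (hσρ.mono hc.1))⟩
  | store t e₁ e₂ =>
    rintro σ σ' ρ ⟨⟩ hσρ
    simp only [Com.inp, Com.out, union_subset_iff, singleton_subset_iff] at hc
    obtain ⟨⟨h₁, h₂⟩, ht⟩ := hc
    refine ⟨_, .store, hσρ.update t ?_⟩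
    rw [hσρ ht, e₁.eval_congr (hσρ.mono h₁), e₂.eval_congr (hσρ.mono h₂)]
  | ite e c₁ c₂ ih₁ ih₂ =>
    simp only [Com.inp, Com.out, union_subset_iff] at hc ih₁ ih₂
    exact ite hc.1.1.1 (ih₁ ⟨hc.1.1.2, hc.2.1⟩) (ih₂ ⟨hc.1.2, hc.2.2⟩)
  | whileDo e c ih =>
    simp only [Com.inp, Com.out, union_subset_iff] at hc ih
    exact whileDo hc.1.1 (ih ⟨hc.1.2, hc.2⟩)
  | use | skip => rintro σ σ' ρ ⟨⟩ hσρ; exact ⟨ρ, by constructor, hσρ⟩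
  | seq c₁ c₂ ih₁ ih₂ =>
    simp only [Com.inp, Com.out, union_subset_iff] at hc ih₁ ih₂
    exact seq (ih₁ ⟨hc.1.1, hc.2.1⟩) (ih₂ ⟨hc.1.2, hc.2.2⟩)

theorem seqList_filter {ι : Type*} (body : ι → Com) (p : ι → Bool)
    (hkept : ∀ i, p i → (body i).inp ∪ (body i).out ⊆ V)
    (hdropped : ∀ i, p i = false → Disjoint (body i).out V) (l : List ι) :
    Simulates V (seqList (l.map body)) (seqList ((l.filter p).map body)) := by
  induction l with
  | nil => exact refl_of_subset (by simp [seqList, Com.inp, Com.out])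
  | cons i l ih =>
    cases hi : p i
    · simpa [List.filter_cons, hi, seqList] using seq_left_of_disjoint (hdropped i hi) ih
    · simpa [List.filter_cons, hi, seqList] using seq (refl_of_subset (hkept i hi)) ih

end Simulates

theorem Finset.sort_eq_filter_finRange {n : ℕ} (S : Finset (Fin n)) :
    S.sort (· ≤ ·) = (List.finRange n).filter (· ∈ S) := by
  refine S.sortedLT_sort.eq_of_mem_iff ?_ (by simp)
  exact List.sortedLT_iff_pairwise.2
    ((List.sortedLT_iff_pairwise.1 (List.sortedLT_finRange n)).filter _)

def footprint {n : ℕ} (e : Expr) (body : Fin n → Com) (S : Finset (Fin n)) : Set Var :=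
  e.occ ∪ ⋃ i ∈ S, ((body i).inp ∪ (body i).out)

theorem disjoint_out_footprint {n : ℕ} {e : Expr} {body : Fin n → Com} {S : Finset (Fin n)}
    (hne : S.Nonempty) (hclosed : ∀ i m, i ∈ S → Dep e body i m → m ∈ S) {m : Fin n}
    (hm : m ∉ S) : Disjoint (body m).out (footprint e body S) := by
  refine Set.disjoint_left.2 fun x hxm hx => ?_
  rcases hx with hxe | hxi
  · obtain ⟨i, hi⟩ := hne
    exact hm (hclosed i m hi (Or.inr ⟨x, hxm, hxe⟩))
  · simp only [mem_iUnion] at hxi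
    obtain ⟨i, hi, hxi⟩ := hxi
    exact hm (hclosed i m hi (Or.inl ⟨fun him => hm (him ▸ hi), x, hxm, hxi⟩))

theorem simulates_splitLoop {n : ℕ} {e : Expr} {body : Fin n → Com} {S : Finset (Fin n)}
    (hne : S.Nonempty) (hclosed : ∀ i m, i ∈ S → Dep e body i m → m ∈ S) :
    Simulates (footprint e body S) (splitLoop e body Finset.univ) (splitLoop e body S) := by
  have hsel : ∀ T : Finset (Fin n),
      selBody body T = seqList (((List.finRange n).filter (· ∈ T)).map body) := fun T => by
    rw [selBody, Finset.sort_eq_filter_finRange]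
  refine Simulates.whileDo subset_union_left ?_
  rw [hsel, hsel, List.filter_eq_self.2 fun _ _ => by simp]
  refine Simulates.seqList_filter body _ (fun i hi => ?_)
    (fun i hi => disjoint_out_footprint hne hclosed (by simpa using hi)) _
  exact fun x hx => Or.inr (mem_iUnion₂.2 ⟨i, by simpa using hi, hx⟩)

/-- Semantic correctness of loop fission: if the loop terminates
from `σ` in `σ'`, and each split loop `C^j` terminates from `σ` in `σ_j`, then
the state `τ` taking the value of each variable modified by some `C^j` from
`σ_j`, and the initial value `σ x` for variables modified by no command of the
body, equals `σ'`. -/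
theorem loop_fission_semantic_correctness {n k : ℕ} (e : Expr)
    (body : Fin n → Com) (S : Fin k → Finset (Fin n))
    (hS : SaturatedCovering e body S) (σ σ' : State)
    (h : BigStep (splitLoop e body Finset.univ) σ σ')
    (σs : Fin k → State)
    (hsplit : ∀ j, BigStep (splitLoop e body (S j)) σ (σs j))
    (τ : State)
    (hτmod : ∀ (x : Var) (j : Fin k) (i : Fin n),
      i ∈ S j → x ∈ (body i).out → τ x = σs j x)
    (hτunmod : ∀ x : Var, (∀ i : Fin n, x ∉ (body i).out) → τ x = σ x) :
    τ = σ' := by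
  obtain ⟨hne, hcov, hclosed⟩ := hS
  have hagree : ∀ j, EqOn σ' (σs j) (footprint e body (S j)) := fun j => by
    obtain ⟨ρ, hρ, hσ'ρ⟩ := simulates_splitLoop (hne j) (hclosed j) h (eqOn_refl _ _)
    rwa [hρ.determ (hsplit j)] at hσ'ρ
  funext x
  by_cases hx : ∃ i, x ∈ (body i).out
  · obtain ⟨i, hxi⟩ := hx
    obtain ⟨j, hij⟩ := hcov i
    rw [hτmod x j i hij hxi]
    exact (hagree j (Or.inr (mem_biUnion hij (Or.inr hxi)))).symm
  · rw [hτunmod x (not_exists.1 hx), h.eq_of_notMem_out]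
    simpa [splitLoop, selBody, Com.out, Com.out_seqList] using hx
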